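/- Let λ > 0, A > 1, and let (θ_n) be a sequence of reals. Define α_0 = A and α_{n+1} = λ^{-1/(n+1)}·(λα_n^{n+1} + ⟨θ_{n+1} − λα_n^{n+1}⟩)^{1/(n+1)}, where ⟨x⟩ denotes the fractional part of x. Then the sequence (α_n) is nondecreasing, and for all n ≥ 0 and all 1 ≤ m ≤ n, α_{n+1}^m − α_n^m < λ^{-1}·A^{m−n−1}. -/

import Mathlib

/-!
Raising the recursion to the power `n + 1` gives
`α (n+1) ^ (n+1) = α n ^ (n+1) + ⟨θ (n+1) - λ α n ^ (n+1)⟩ / λ`, so each step increases the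
`(n+1)`-st power by a number in `[0, λ⁻¹)`; hence the sequence is nondecreasing and stays `≥ A`.
For `m ≤ n`, write `n + 1 = k + m`: since `α n ≤ α (n+1)`, the gap of the `m`-th powers, multiplied
by `α n ^ k ≥ A ^ k`, is at most the gap of the `(n+1)`-st powers, which is `< λ⁻¹`.
-/

namespace Real

theorem rpow_neg_one_div_mul_rpow_one_div_pow {c B : ℝ} (hc : 0 ≤ c) (hB : 0 ≤ B) (n : ℕ) :
    (c ^ (-(1 / (n + 1 : ℝ))) * B ^ (1 / (n + 1 : ℝ))) ^ (n + 1) = B / c := by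
  have hn : n + 1 ≠ 0 := n.succ_ne_zero
  have hroot : ∀ {x : ℝ}, 0 ≤ x → (x ^ (1 / (n + 1 : ℝ))) ^ (n + 1) = x := fun hx => by
    simpa [one_div] using rpow_inv_natCast_pow hx hn
  rw [rpow_neg hc, mul_pow, inv_pow, hroot hc, hroot hB, div_eq_inv_mul]

end Real

section RootStep

variable {c x y f : ℝ} {n : ℕ}

theorem pow_succ_eq_add_div_of_eq_rpow (hc : 0 < c) (hx : 0 ≤ x) (hf : 0 ≤ f)
    (hy : y = c ^ (-(1 / (n + 1 : ℝ))) * (c * x ^ (n + 1) + f) ^ (1 / (n + 1 : ℝ))) :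
    y ^ (n + 1) = x ^ (n + 1) + f / c := by
  rw [hy, Real.rpow_neg_one_div_mul_rpow_one_div_pow hc.le (by positivity), add_div,
    mul_div_cancel_left₀ _ hc.ne']

theorem le_of_eq_rpow (hc : 0 < c) (hx : 0 ≤ x) (hf : 0 ≤ f)
    (hy : y = c ^ (-(1 / (n + 1 : ℝ))) * (c * x ^ (n + 1) + f) ^ (1 / (n + 1 : ℝ))) :
    x ≤ y := by
  have hy0 : 0 ≤ y := hy ▸ by positivity
  refine le_of_pow_le_pow_left₀ n.succ_ne_zero hy0 ?_
  rw [pow_succ_eq_add_div_of_eq_rpow hc hx hf hy]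
  exact le_add_of_nonneg_right (div_nonneg hf hc.le)

end RootStep

theorem mul_pow_sub_pow_le_pow_add_sub_pow_add {a b : ℝ} (hb : 0 ≤ b) (hab : b ≤ a) (k m : ℕ) :
    b ^ k * (a ^ m - b ^ m) ≤ a ^ (k + m) - b ^ (k + m) := by
  have : b ^ k * a ^ m ≤ a ^ k * a ^ m :=
    mul_le_mul_of_nonneg_right (pow_le_pow_left₀ hb hab k) (pow_nonneg (hb.trans hab) m)
  rw [pow_add, pow_add]
  linarith

theorem pow_sub_pow_lt_div_pow {A a b D : ℝ} {k m : ℕ} (hA : 0 < A) (hAb : A ≤ b) (hab : b ≤ a)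
    (h : a ^ (k + m) - b ^ (k + m) < D) :
    a ^ m - b ^ m < D / A ^ k := by
  have hAk : 0 < A ^ k := pow_pos hA k
  have hdiff : 0 ≤ a ^ m - b ^ m := sub_nonneg.2 (pow_le_pow_left₀ (hA.le.trans hAb) hab m)
  rw [lt_div_iff₀ hAk]
  calc (a ^ m - b ^ m) * A ^ k ≤ b ^ k * (a ^ m - b ^ m) := by
        rw [mul_comm]; exact mul_le_mul_of_nonneg_right (pow_le_pow_left₀ hA.le hAb k) hdiff
    _ ≤ a ^ (k + m) - b ^ (k + m) := mul_pow_sub_pow_le_pow_add_sub_pow_add (hA.le.trans hAb) hab k m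
    _ < D := h

theorem alpha_seq_monotone_and_diff_bound
    (lam A : ℝ) (hlam : 0 < lam) (hA : 1 < A)
    (θ : ℕ → ℝ) (α : ℕ → ℝ)
    (h0 : α 0 = A)
    (hrec : ∀ n : ℕ, α (n + 1) =
      lam ^ (-(1 / (n + 1 : ℝ))) *
        (lam * α n ^ (n + 1) +
          Int.fract (θ (n + 1) - lam * α n ^ (n + 1))) ^ (1 / (n + 1 : ℝ))) :
    Monotone α ∧
      ∀ n m : ℕ, 1 ≤ m → m ≤ n →
        α (n + 1) ^ m - α n ^ m < lam⁻¹ * A ^ ((m : ℤ) - n - 1) := by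
  have hA0 : 0 < A := by linarith
  have hfract (n : ℕ) := Int.fract_nonneg (θ (n + 1) - lam * α n ^ (n + 1))
  have hA_le (n : ℕ) : A ≤ α n := by
    induction n with
    | zero => exact h0.ge
    | succ n ih => exact ih.trans (le_of_eq_rpow hlam (hA0.le.trans ih) (hfract n) (hrec n))
  have hle_succ (n : ℕ) : α n ≤ α (n + 1) :=
    le_of_eq_rpow hlam (hA0.le.trans (hA_le n)) (hfract n) (hrec n)
  refine ⟨monotone_nat_of_le_succ hle_succ, fun n m _ hmn => ?_⟩
  obtain ⟨k, hk⟩ : ∃ k, n + 1 = k + m := ⟨n + 1 - m, by omega⟩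
  have hgap : α (n + 1) ^ (k + m) - α n ^ (k + m) < lam⁻¹ := by
    rw [← hk, pow_succ_eq_add_div_of_eq_rpow hlam (hA0.le.trans (hA_le n)) (hfract n) (hrec n),
      add_sub_cancel_left, div_eq_inv_mul]
    exact mul_lt_of_lt_one_right (inv_pos.2 hlam) (Int.fract_lt_one _)
  have hexp : (m : ℤ) - n - 1 = -(k : ℤ) := by omega
  rw [hexp, zpow_neg, zpow_natCast, ← div_eq_mul_inv]
  exact pow_sub_pow_lt_div_pow hA0 (hA_le n) (hle_succ n) hgap
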